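/- arXiv:2306.16628 — 2 statements merged into one kernel-verified Lean document; each statement's English description precedes it below -/
import Mathlib

section
/- Assume the payoff parameters satisfy either (a) p3 > p1 > p4 > p2, or (b) p3 > p1 > p2 > p4 together with p1 + p2 < p3 + p4 and 4·p2 < p3 + 3·p4; and assume in addition that the sets {p1 + 3p2, 2p1 + 2p2, 3p1 + p2} and {p3 + 3p4, 2p3 + 2p4} are disjoint. Then on the toroidal grid G_{N,M} with N, M ≥ 3, Ω* = {S_C, S_D}; i.e. the only configurations in which any two adjacent nodes with different strategies have equal payoffs are the all-cooperation configuration and the all-defection configuration. -/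
open MeasureTheory

namespace EvolGame

/-- A strategy: cooperation `C` or defection `D`. -/
inductive Strat : Type
  | C : Strat
  | D : Strat
  deriving DecidableEq

/-- Node set of the toroidal grid `G_{N,M}`. -/
abbrev Node (N M : ℕ) := ZMod N × ZMod M

/-- A strategy configuration. -/
abbrev Config (N M : ℕ) := Node N M → Strat

/-- Adjacency on the toroidal grid. -/
def adj {N M : ℕ} (u v : Node N M) : Prop :=
  u - v = (1, 0) ∨ u - v = (-1, 0) ∨ u - v = (0, 1) ∨ u - v = (0, -1)

/-- The (at most four) neighbors of a node. -/
def neighbors {N M : ℕ} (v : Node N M) : Finset (Node N M) :=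
  {v + (1, 0), v + (-1, 0), v + (0, 1), v + (0, -1)}

/-- Number of cooperating neighbors of `v` under configuration `S`. -/
def coopCount {N M : ℕ} (S : Config N M) (v : Node N M) : ℕ :=
  ((neighbors v).filter (fun u => S u = Strat.C)).card

/-- Payoff of node `v` under configuration `S` with payoff parameters `p1,p2,p3,p4`. -/
def payoff (p1 p2 p3 p4 : ℝ) {N M : ℕ} (S : Config N M) (v : Node N M) : ℝ :=
  if S v = Strat.C then
    (coopCount S v : ℝ) * p1 + (4 - (coopCount S v : ℝ)) * p2
  else
    (coopCount S v : ℝ) * p3 + (4 - (coopCount S v : ℝ)) * p4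

/-- A control assigns to each node one of its neighbors. -/
def IsControl {N M : ℕ} (c : Node N M → Node N M) : Prop :=
  ∀ v, adj (c v) v

open Classical in
/-- The controlled update `F(S,c)`. -/
noncomputable def F (p1 p2 p3 p4 : ℝ) {N M : ℕ} (S : Config N M)
    (c : Node N M → Node N M) : Config N M :=
  fun v =>
    if payoff p1 p2 p3 p4 S v < payoff p1 p2 p3 p4 S (c v) then S (c v) else S v

/-- The set `R(S)` of configurations reachable from `S` in one imitation step. -/
def Rset (p1 p2 p3 p4 : ℝ) {N M : ℕ} (S : Config N M) : Set (Config N M) :=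
  {S' | ∀ v, S' v = S v ∨
    ∃ u, adj u v ∧ S' v = S u ∧ payoff p1 p2 p3 p4 S v < payoff p1 p2 p3 p4 S u}

/-- `Ω*`: adjacent nodes with different strategies have equal payoffs. -/
def OmegaStar (p1 p2 p3 p4 : ℝ) (N M : ℕ) : Set (Config N M) :=
  {S | ∀ u v, adj u v → S u ≠ S v →
    payoff p1 p2 p3 p4 S u = payoff p1 p2 p3 p4 S v}

/-- Controlled trajectory of the CEG. -/
noncomputable def traj (p1 p2 p3 p4 : ℝ) {N M : ℕ} (S0 : Config N M)
    (c : ℕ → Node N M → Node N M) : ℕ → Config N M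
  | 0 => S0
  | t + 1 => F p1 p2 p3 p4 (traj p1 p2 p3 p4 S0 c t) (c t)

/-- `A` is reachable from `S0` under the CEG within `T` steps. -/
def ReachableWithin (p1 p2 p3 p4 : ℝ) {N M : ℕ} (A : Set (Config N M))
    (S0 : Config N M) (T : ℕ) : Prop :=
  ∃ t ≤ T, ∃ c : ℕ → Node N M → Node N M,
    (∀ s, IsControl (c s)) ∧ traj p1 p2 p3 p4 S0 c t ∈ A

/-- The discrete σ-algebra on the finite configuration space. -/
instance {N M : ℕ} : MeasurableSpace (Config N M) := ⊤

/-- `μ` is the law of the time-homogeneous Markov chain with kernel `κ` started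
at `S0`, characterized by its finite-dimensional (cylinder) distributions. -/
def IsChainLaw {N M : ℕ} (κ : Config N M → PMF (Config N M)) (S0 : Config N M)
    (μ : Measure (ℕ → Config N M)) : Prop :=
  IsProbabilityMeasure μ ∧
  ∀ (t : ℕ) (s : ℕ → Config N M), s 0 = S0 →
    μ {ω | ∀ i ≤ t, ω i = s i} = ∏ i ∈ Finset.range t, κ (s i) (s (i + 1))

/-- An admissible imitation kernel with margin `ε`. -/
def IsAdmissible (p1 p2 p3 p4 : ℝ) {N M : ℕ} (ε : ℝ)
    (κ : Config N M → PMF (Config N M)) : Prop :=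
  (∀ (S : Config N M) (c : Node N M → Node N M), IsControl c →
      ENNReal.ofReal ε ≤ κ S (F p1 p2 p3 p4 S c)) ∧
  (∀ S : Config N M, ∑' S' : Rset p1 p2 p3 p4 S, κ S (S' : Config N M) = 1)

open Classical in
/-- The `W`-frozen controlled update. -/
noncomputable def FW (p1 p2 p3 p4 : ℝ) {N M : ℕ} (W : Set (Node N M))
    (S : Config N M) (c : Node N M → Node N M) : Config N M :=
  fun v => if v ∈ W then S v else F p1 p2 p3 p4 S c v

/-- The `W`-frozen one-step reach set `R_W(S)`. -/
def RsetW (p1 p2 p3 p4 : ℝ) {N M : ℕ} (W : Set (Node N M)) (S : Config N M) :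
    Set (Config N M) :=
  {S' | (∀ v ∈ W, S' v = S v) ∧
    ∀ v ∉ W, S' v = S v ∨
      ∃ u, adj u v ∧ S' v = S u ∧ payoff p1 p2 p3 p4 S v < payoff p1 p2 p3 p4 S u}

/-- Controlled trajectory of the `W`-frozen CEG. -/
noncomputable def trajW (p1 p2 p3 p4 : ℝ) {N M : ℕ} (W : Set (Node N M))
    (S0 : Config N M) (c : ℕ → Node N M → Node N M) : ℕ → Config N M
  | 0 => S0
  | t + 1 => FW p1 p2 p3 p4 W (trajW p1 p2 p3 p4 W S0 c t) (c t)

/-- `A` is reachable from `S0` under the `W`-frozen CEG within `T` steps. -/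
def ReachableWithinW (p1 p2 p3 p4 : ℝ) {N M : ℕ} (W : Set (Node N M))
    (A : Set (Config N M)) (S0 : Config N M) (T : ℕ) : Prop :=
  ∃ t ≤ T, ∃ c : ℕ → Node N M → Node N M,
    (∀ s, IsControl (c s)) ∧ trajW p1 p2 p3 p4 W S0 c t ∈ A

/-- A `W`-frozen admissible imitation kernel with margin `ε`. -/
def IsAdmissibleW (p1 p2 p3 p4 : ℝ) {N M : ℕ} (W : Set (Node N M)) (ε : ℝ)
    (κ : Config N M → PMF (Config N M)) : Prop :=
  (∀ (S : Config N M) (c : Node N M → Node N M), IsControl c →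
      ENNReal.ofReal ε ≤ κ S (FW p1 p2 p3 p4 W S c)) ∧
  (∀ S : Config N M, ∑' S' : RsetW p1 p2 p3 p4 W S, κ S (S' : Config N M) = 1)


/-!
If a cooperator `u` is adjacent to a defector `v`, then `u` has at most three cooperating
neighbors and `v` at least one, so their payoffs are `k p1 + (4 - k) p2` with `k ≤ 3` and
`l p3 + (4 - l) p4` with `l ≥ 1`. Both expressions increase with the count; the order conditions
on the payoffs separate them when `k = 0` or `l ≥ 3`, and the disjointness condition covers the
remaining pairs. So in a configuration of `Ω*` adjacent nodes play the same strategy, and since the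
torus is connected the configuration is constant.
-/

lemma adj.symm {N M : ℕ} {u v : Node N M} (h : adj u v) : adj v u := by
  unfold adj at *
  rw [← neg_sub u v]
  rcases h with h | h | h | h <;> simp [h]

lemma mem_neighbors_of_adj {N M : ℕ} {u v : Node N M} (h : adj u v) : u ∈ neighbors v := by
  rcases h with h | h | h | h <;> rw [sub_eq_iff_eq_add'] at h <;> simp [neighbors, h]

lemma coopCount_lt_four_of_adj {N M : ℕ} {S : Config N M} {u v : Node N M} (h : adj v u)
    (hv : S v = Strat.D) : coopCount S u < 4 :=
  calc coopCount S u < (neighbors u).card :=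
        Finset.card_lt_card <| Finset.filter_ssubset.2 ⟨v, mem_neighbors_of_adj h, by simp [hv]⟩
    _ ≤ 4 := Finset.card_le_four

lemma coopCount_pos_of_adj {N M : ℕ} {S : Config N M} {u v : Node N M} (h : adj u v)
    (hu : S u = Strat.C) : 0 < coopCount S v :=
  Finset.card_pos.2 ⟨u, Finset.mem_filter.2 ⟨mem_neighbors_of_adj h, hu⟩⟩

lemma eq_apply_zero_of_forall_adj {N M : ℕ} {S : Config N M} (h : ∀ u v, adj u v → S u = S v)
    (v : Node N M) : S v = S 0 := by
  have h₁ : Function.Periodic S ((1, 0) : Node N M) := fun w =>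
    h _ _ (Or.inl (add_sub_cancel_left w _))
  have h₂ : Function.Periodic S ((0, 1) : Node N M) := fun w =>
    h _ _ (Or.inr (Or.inr (Or.inl (add_sub_cancel_left w _))))
  obtain ⟨i, hi⟩ := ZMod.intCast_surjective v.1
  obtain ⟨j, hj⟩ := ZMod.intCast_surjective v.2
  have hv : v = 0 + i • ((1, 0) : Node N M) + j • (0, 1) := by ext <;> simp [hi, hj]
  rw [hv, h₂.zsmul j, h₁.zsmul i]

def linPayoff (x y k : ℝ) : ℝ := k * x + (4 - k) * y

lemma linPayoff_mono {x y : ℝ} (h : y ≤ x) : Monotone (linPayoff x y) := fun k l hkl => by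
  have := mul_le_mul_of_nonneg_right hkl (sub_nonneg.2 h)
  unfold linPayoff
  linarith

section Payoff

variable {p1 p2 p3 p4 : ℝ}

lemma payoff_of_coop {N M : ℕ} {S : Config N M} {v : Node N M} (h : S v = Strat.C) :
    payoff p1 p2 p3 p4 S v = linPayoff p1 p2 (coopCount S v) := by
  simp [payoff, linPayoff, h]

lemma payoff_of_defect {N M : ℕ} {S : Config N M} {v : Node N M} (h : S v = Strat.D) :
    payoff p1 p2 p3 p4 S v = linPayoff p3 p4 (coopCount S v) := by
  simp [payoff, linPayoff, h]

variable (h21 : p2 < p1) (h43 : p4 < p3) (hlow : 4 * p2 < p3 + 3 * p4)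
  (hhigh : 3 * p1 + p2 < 3 * p3 + p4)
  (hdisj : Disjoint ({p1 + 3 * p2, 2 * p1 + 2 * p2, 3 * p1 + p2} : Set ℝ)
    {p3 + 3 * p4, 2 * p3 + 2 * p4})
include h21 h43 hlow hhigh hdisj

lemma linPayoff_coop_ne_defect {k l : ℕ} (hk : k < 4) (hl : 0 < l) :
    linPayoff p1 p2 k ≠ linPayoff p3 p4 l := by
  rcases Nat.lt_or_ge l 3 with hl3 | hl3
  · rcases Nat.eq_zero_or_pos k with rfl | hk0
    · refine ne_of_lt ?_
      calc linPayoff p1 p2 (0 : ℕ) < linPayoff p3 p4 1 := by norm_num [linPayoff]; linarith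
        _ ≤ linPayoff p3 p4 l := linPayoff_mono h43.le (Nat.one_le_cast.2 hl)
    · exact hdisj.ne_of_mem (by interval_cases k <;> norm_num [linPayoff])
        (by interval_cases l <;> norm_num [linPayoff])
  · refine ne_of_lt ?_
    calc linPayoff p1 p2 k ≤ linPayoff p1 p2 3 :=
          linPayoff_mono h21.le (by exact_mod_cast Nat.le_of_lt_succ hk)
      _ < linPayoff p3 p4 3 := by norm_num [linPayoff]; linarith
      _ ≤ linPayoff p3 p4 l := linPayoff_mono h43.le (by exact_mod_cast hl3)

lemma payoff_ne_of_adj {N M : ℕ} {S : Config N M} {u v : Node N M} (h : adj u v)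
    (hu : S u = Strat.C) (hv : S v = Strat.D) :
    payoff p1 p2 p3 p4 S u ≠ payoff p1 p2 p3 p4 S v := by
  rw [payoff_of_coop hu, payoff_of_defect hv]
  exact linPayoff_coop_ne_defect h21 h43 hlow hhigh hdisj
    (coopCount_lt_four_of_adj h.symm hv) (coopCount_pos_of_adj h hu)

lemma eq_of_adj_of_mem_omegaStar {N M : ℕ} {S : Config N M}
    (hS : S ∈ OmegaStar p1 p2 p3 p4 N M) {u v : Node N M} (h : adj u v) : S u = S v := by
  cases hu : S u <;> cases hv : S v
  · rfl
  · exact absurd (hS u v h (by simp [hu, hv]))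
      (payoff_ne_of_adj h21 h43 hlow hhigh hdisj h hu hv)
  · exact absurd (hS v u h.symm (by simp [hu, hv]))
      (payoff_ne_of_adj h21 h43 hlow hhigh hdisj h.symm hv hu)
  · rfl

end Payoff

theorem omegaStar_eq_pair_general {N M : ℕ}
    (p1 p2 p3 p4 : ℝ)
    (hcase : (p3 > p1 ∧ p1 > p4 ∧ p4 > p2) ∨
      (p3 > p1 ∧ p1 > p2 ∧ p2 > p4 ∧ p1 + p2 < p3 + p4 ∧ 4 * p2 < p3 + 3 * p4))
    (hdisj : ({p1 + 3 * p2, 2 * p1 + 2 * p2, 3 * p1 + p2} : Set ℝ) ∩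
      ({p3 + 3 * p4, 2 * p3 + 2 * p4} : Set ℝ) = ∅) :
    OmegaStar p1 p2 p3 p4 N M =
      {(fun _ => Strat.C : Config N M), (fun _ => Strat.D : Config N M)} := by
  obtain ⟨h21, h43, hlow, hhigh⟩ : p2 < p1 ∧ p4 < p3 ∧ 4 * p2 < p3 + 3 * p4 ∧
      3 * p1 + p2 < 3 * p3 + p4 := by
    rcases hcase with h | h <;> refine ⟨?_, ?_, ?_, ?_⟩ <;> linarith
  ext S
  constructor
  · intro hS
    have hconst := eq_apply_zero_of_forall_adj fun u v =>
      eq_of_adj_of_mem_omegaStar h21 h43 hlow hhigh (Set.disjoint_iff_inter_eq_empty.2 hdisj) hS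
    cases h0 : S 0
    · exact Or.inl (funext fun v => (hconst v).trans h0)
    · exact Or.inr (funext fun v => (hconst v).trans h0)
  · rintro (rfl | rfl) <;> exact fun u v _ hne => absurd rfl hne

/-- under the prisoner's dilemma or snowdrift conditions together
with the payoff-disjointness condition, `Ω*` consists exactly of the
all-cooperation and the all-defection configurations. -/
theorem omegaStar_eq_pair {N M : ℕ} (hN : 3 ≤ N) (hM : 3 ≤ M)
    (p1 p2 p3 p4 : ℝ)
    (hcase : (p3 > p1 ∧ p1 > p4 ∧ p4 > p2) ∨
      (p3 > p1 ∧ p1 > p2 ∧ p2 > p4 ∧ p1 + p2 < p3 + p4 ∧ 4 * p2 < p3 + 3 * p4))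
    (hdisj : ({p1 + 3 * p2, 2 * p1 + 2 * p2, 3 * p1 + p2} : Set ℝ) ∩
      ({p3 + 3 * p4, 2 * p3 + 2 * p4} : Set ℝ) = ∅) :
    OmegaStar p1 p2 p3 p4 N M =
      {(fun _ => Strat.C : Config N M), (fun _ => Strat.D : Config N M)} :=
  omegaStar_eq_pair_general p1 p2 p3 p4 hcase hdisj

end EvolGame
end

section
/- Consider the evolutionary stag hunt game on the toroidal grid G_{N,M} with N, M ≥ 3, i.e. assume p1 > p3 > p4 > p2, and assume additionally p1 + p2 > 2·p3. Suppose the initial configuration S₀ contains four cooperation nodes forming a square, i.e. there exists (i,j) ∈ V with S₀(i,j) = S₀(i+1,j) = S₀(i,j+1) = S₀(i+1,j+1) = C. Then for every ε > 0 and every admissible imitation kernel κ with margin ε, ℙ_{S₀}-almost surely there exists a finite time T such that S_t = S_C for all t ≥ T. -/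
/-!
A cooperator with at least two cooperating neighbours earns at least `2 p1 + 2 p2 > 4 p3`, which
is more than any defector earns. Hence cooperation on a set of nodes each having two neighbours
inside the set never recedes, and one suitably controlled update lets such a rectangle absorb an
adjacent column or row. Growing the initial `2 × 2` square column by column and then row by row
reaches `S_C` within `T = (N - 2) + (M - 2)` controlled steps, an event of probability at least
`ε ^ T` from every configuration containing a square. The squares persist and `S_C` is absorbing,
so the probability of avoiding `S_C` up to time `n T` is at most `(1 - ε ^ T) ^ n`.
-/

open MeasureTheory

namespace EvolGame

instance : Fintype Strat := ⟨{Strat.C, Strat.D}, by rintro (_ | _) <;> simp⟩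

section Growth

variable {N M : ℕ} {p1 p2 p3 p4 : ℝ}

lemma adj_iff_mem_neighbors {u v : Node N M} : adj u v ↔ u ∈ neighbors v := by
  simp only [adj, neighbors, Finset.mem_insert, Finset.mem_singleton, sub_eq_iff_eq_add']

lemma coopCount_le_four (S : Config N M) (v : Node N M) : coopCount S v ≤ 4 :=
  (Finset.card_filter_le _ _).trans (Finset.card_le_four)

lemma two_le_coopCount_of_adj {S : Config N M} {u w₁ w₂ : Node N M} (hne : w₁ ≠ w₂)
    (h₁ : adj w₁ u) (h₂ : adj w₂ u) (hS₁ : S w₁ = Strat.C) (hS₂ : S w₂ = Strat.C) :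
    2 ≤ coopCount S u := by
  rw [← Finset.card_pair hne]
  refine Finset.card_le_card fun w hw => ?_
  rw [Finset.mem_insert, Finset.mem_singleton] at hw
  rcases hw with rfl | rfl
  · exact Finset.mem_filter.mpr ⟨adj_iff_mem_neighbors.mp h₁, hS₁⟩
  · exact Finset.mem_filter.mpr ⟨adj_iff_mem_neighbors.mp h₂, hS₂⟩

def CoopPairBeatsDefector (p1 p2 p3 p4 : ℝ) : Prop :=
  ∀ {N M : ℕ} (S : Config N M) (u w : Node N M), S u = Strat.C → 2 ≤ coopCount S u →
    S w = Strat.D → payoff p1 p2 p3 p4 S w < payoff p1 p2 p3 p4 S u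

lemma coopPairBeatsDefector_of_le (h34 : p4 ≤ p3) (h21 : p2 ≤ p1) (hsum : 2 * p3 < p1 + p2) :
    CoopPairBeatsDefector p1 p2 p3 p4 := by
  intro N M S u w hu hk hw
  have hk4 : (coopCount S u : ℝ) ≤ 4 := by exact_mod_cast coopCount_le_four S u
  have hk2 : (2 : ℝ) ≤ coopCount S u := by exact_mod_cast hk
  have hj4 : (coopCount S w : ℝ) ≤ 4 := by exact_mod_cast coopCount_le_four S w
  have hj0 : (0 : ℝ) ≤ coopCount S w := Nat.cast_nonneg _
  simp only [payoff, hu, hw, if_true, reduceCtorEq, if_false]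
  nlinarith

lemma F_mem_Rset {S : Config N M} {c : Node N M → Node N M} (hc : IsControl c) :
    F p1 p2 p3 p4 S c ∈ Rset p1 p2 p3 p4 S := by
  intro v
  by_cases h : payoff p1 p2 p3 p4 S v < payoff p1 p2 p3 p4 S (c v)
  · exact Or.inr ⟨c v, hc v, if_pos h, h⟩
  · exact Or.inl (if_neg h)

lemma F_apply_eq_C (hp : CoopPairBeatsDefector p1 p2 p3 p4) {S : Config N M}
    {c : Node N M → Node N M} {w : Node N M} (hC : S (c w) = Strat.C)
    (hk : 2 ≤ coopCount S (c w)) : F p1 p2 p3 p4 S c w = Strat.C := by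
  dsimp only [F]
  split_ifs with h
  · exact hC
  · cases hw : S w
    · rfl
    · exact absurd (hp S (c w) w hC hk hw) h

def IsThick (K : Set (Node N M)) : Prop :=
  ∀ u ∈ K, ∃ w₁ ∈ K, ∃ w₂ ∈ K, w₁ ≠ w₂ ∧ adj w₁ u ∧ adj w₂ u

def coopOn (K : Set (Node N M)) : Set (Config N M) := {S | ∀ u ∈ K, S u = Strat.C}

variable {K K' : Set (Node N M)} {S : Config N M}

lemma IsThick.two_le_coopCount (hK : IsThick K) (hS : S ∈ coopOn K) {u : Node N M}
    (hu : u ∈ K) : 2 ≤ coopCount S u := by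
  obtain ⟨w₁, hw₁, w₂, hw₂, hne, h₁, h₂⟩ := hK u hu
  exact two_le_coopCount_of_adj hne h₁ h₂ (hS w₁ hw₁) (hS w₂ hw₂)

lemma IsThick.coopOn_of_mem_Rset (hp : CoopPairBeatsDefector p1 p2 p3 p4) (hK : IsThick K)
    (hS : S ∈ coopOn K) {S' : Config N M} (hS' : S' ∈ Rset p1 p2 p3 p4 S) :
    S' ∈ coopOn K := by
  intro u hu
  rcases hS' u with h | ⟨w, -, h, hlt⟩
  · rw [h, hS u hu]
  · cases hw : S w
    · rw [h, hw]
    · exact absurd hlt (hp S u w (hS u hu) (hK.two_le_coopCount hS hu) hw).asymm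

lemma IsThick.exists_control (hp : CoopPairBeatsDefector p1 p2 p3 p4) (hK : IsThick K)
    (hS : S ∈ coopOn K) (hK' : ∀ w ∈ K', w ∈ K ∨ ∃ u ∈ K, adj u w) :
    ∃ c, IsControl c ∧ F p1 p2 p3 p4 S c ∈ coopOn K' := by
  classical
  have hnb : ∀ w ∈ K', ∃ u ∈ K, adj u w := by
    intro w hw
    rcases hK' w hw with hwK | h
    · obtain ⟨u, hu, -, -, -, hadj, -⟩ := hK w hwK
      exact ⟨u, hu, hadj⟩
    · exact h
  let c : Node N M → Node N M := fun w =>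
    if h : ∃ u ∈ K, adj u w then h.choose else w + (1, 0)
  refine ⟨c, fun w => ?_, fun w hw => ?_⟩
  · by_cases h : ∃ u ∈ K, adj u w
    · simpa only [c, dif_pos h] using h.choose_spec.2
    · simp only [c, dif_neg h]
      simp [adj]
  · have hcK : c w ∈ K := by simpa only [c, dif_pos (hnb w hw)] using (hnb w hw).choose_spec.1
    exact F_apply_eq_C hp (hS _ hcK) (hK.two_le_coopCount hS hcK)

end Growth

section Reachability

variable {N M : ℕ} {p1 p2 p3 p4 : ℝ} {A B : Set (Config N M)} {S : Config N M}

lemma traj_add (S : Config N M) (c : ℕ → Node N M → Node N M) (m n : ℕ) :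
    traj p1 p2 p3 p4 S c (m + n)
      = traj p1 p2 p3 p4 (traj p1 p2 p3 p4 S c m) (fun i => c (m + i)) n := by
  induction n with
  | zero => rfl
  | succ n ih => exact congrArg (F p1 p2 p3 p4 · (c (m + n))) ih

lemma traj_congr (S : Config N M) {c c' : ℕ → Node N M → Node N M} {t : ℕ}
    (h : ∀ i < t, c i = c' i) : traj p1 p2 p3 p4 S c t = traj p1 p2 p3 p4 S c' t := by
  induction t with
  | zero => rfl
  | succ t ih =>
    simp only [traj, ih fun i hi => h i (by omega), h t (by omega)]

lemma traj_mem_of_Rset_subset (hA : ∀ S ∈ A, Rset p1 p2 p3 p4 S ⊆ A) (hS : S ∈ A)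
    {c : ℕ → Node N M → Node N M} (hc : ∀ s, IsControl (c s)) (n : ℕ) :
    traj p1 p2 p3 p4 S c n ∈ A := by
  induction n with
  | zero => exact hS
  | succ n ih => exact hA _ ih (F_mem_Rset (hc n))

lemma reachableWithin_zero (hS : S ∈ A) : ReachableWithin p1 p2 p3 p4 A S 0 :=
  ⟨0, le_rfl, fun _ v => v + (1, 0), fun _ _ => by simp [adj], hS⟩

lemma reachableWithin_one {c : Node N M → Node N M} (hc : IsControl c)
    (h : F p1 p2 p3 p4 S c ∈ A) : ReachableWithin p1 p2 p3 p4 A S 1 :=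
  ⟨1, le_rfl, fun _ => c, fun _ => hc, h⟩

lemma ReachableWithin.trans {T₁ T₂ : ℕ} (h₁ : ReachableWithin p1 p2 p3 p4 A S T₁)
    (h₂ : ∀ S' ∈ A, ReachableWithin p1 p2 p3 p4 B S' T₂) :
    ReachableWithin p1 p2 p3 p4 B S (T₁ + T₂) := by
  obtain ⟨t₁, ht₁, c₁, hc₁, hA⟩ := h₁
  obtain ⟨t₂, ht₂, c₂, hc₂, hB⟩ := h₂ _ hA
  let c : ℕ → Node N M → Node N M := fun i => if i < t₁ then c₁ i else c₂ (i - t₁)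
  refine ⟨t₁ + t₂, by omega, c, fun i => ?_, ?_⟩
  · by_cases hi : i < t₁
    · simpa only [c, if_pos hi] using hc₁ i
    · simpa only [c, if_neg hi] using hc₂ (i - t₁)
  · have h₁ : traj p1 p2 p3 p4 S c t₁ = traj p1 p2 p3 p4 S c₁ t₁ :=
      traj_congr S fun i hi => if_pos hi
    have h₂ : (fun i => c (t₁ + i)) = c₂ := funext fun i => by simp [c]
    rwa [traj_add, h₁, h₂]

lemma ReachableWithin.exists_traj_mem (hA : ∀ S ∈ A, Rset p1 p2 p3 p4 S ⊆ A) {T : ℕ}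
    (h : ReachableWithin p1 p2 p3 p4 A S T) :
    ∃ c : ℕ → Node N M → Node N M, (∀ s, IsControl (c s)) ∧
      traj p1 p2 p3 p4 S c T ∈ A := by
  obtain ⟨t, ht, c, hc, hA'⟩ := h
  refine ⟨c, hc, ?_⟩
  rw [← Nat.add_sub_cancel' ht, traj_add]
  exact traj_mem_of_Rset_subset hA hA' (fun s => hc (t + s)) _

end Reachability

section Rectangles

variable {N M : ℕ} {p1 p2 p3 p4 : ℝ}

def rect (v : Node N M) (a b : ℕ) : Set (Node N M) :=
  {u | ∃ x ≤ a, ∃ y ≤ b, u = v + ((x : ZMod N), (y : ZMod M))}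

lemma exists_adjacent_index {R : Type*} [CommRing R] {a x : ℕ} (ha : 1 ≤ a) (hx : x ≤ a) :
    ∃ x' ≤ a, (x' : R) - x = 1 ∨ (x' : R) - x = -1 := by
  rcases Nat.lt_or_ge x a with h | h
  · exact ⟨x + 1, h, Or.inl (by push_cast; ring)⟩
  · refine ⟨x - 1, by omega, Or.inr ?_⟩
    rw [Nat.cast_sub (by omega), Nat.cast_one]
    ring

lemma adj_add_mk_fst (v : Node N M) {x x' : ZMod N} (y : ZMod M)
    (h : x' - x = 1 ∨ x' - x = -1) : adj (v + (x', y)) (v + (x, y)) := by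
  rcases h with h | h <;> simp [adj, h]

lemma adj_add_mk_snd (v : Node N M) (x : ZMod N) {y y' : ZMod M}
    (h : y' - y = 1 ∨ y' - y = -1) : adj (v + (x, y')) (v + (x, y)) := by
  rcases h with h | h <;> simp [adj, h]

lemma isThick_rect [Nontrivial (ZMod N)] {v : Node N M} {a b : ℕ} (ha : 1 ≤ a) (hb : 1 ≤ b) :
    IsThick (rect v a b) := by
  rintro _ ⟨x, hx, y, hy, rfl⟩
  obtain ⟨x', hx', hxx⟩ := exists_adjacent_index (R := ZMod N) ha hx
  obtain ⟨y', hy', hyy⟩ := exists_adjacent_index (R := ZMod M) hb hy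
  refine ⟨_, ⟨x', hx', y, hy, rfl⟩, _, ⟨x, hx, y', hy', rfl⟩, fun h => ?_,
    adj_add_mk_fst v _ hxx, adj_add_mk_snd v _ hyy⟩
  have hx0 : (x' : ZMod N) - x = 0 := by
    rw [sub_eq_zero]
    simpa using congrArg Prod.fst h
  rcases hxx with h1 | h1 <;> rw [h1] at hx0
  · exact one_ne_zero hx0
  · exact neg_ne_zero.mpr one_ne_zero hx0

lemma rect_succ_left {v : Node N M} {a b : ℕ} :
    ∀ w ∈ rect v (a + 1) b, w ∈ rect v a b ∨ ∃ u ∈ rect v a b, adj u w := by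
  rintro _ ⟨x, hx, y, hy, rfl⟩
  rcases Nat.lt_or_ge x (a + 1) with h | h
  · exact Or.inl ⟨x, by omega, y, hy, rfl⟩
  · refine Or.inr ⟨_, ⟨a, le_rfl, y, hy, rfl⟩, adj_add_mk_fst v _ (Or.inr ?_)⟩
    rw [show x = a + 1 by omega]
    push_cast
    ring

lemma rect_succ_right {v : Node N M} {a b : ℕ} :
    ∀ w ∈ rect v a (b + 1), w ∈ rect v a b ∨ ∃ u ∈ rect v a b, adj u w := by
  rintro _ ⟨x, hx, y, hy, rfl⟩
  rcases Nat.lt_or_ge y (b + 1) with h | h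
  · exact Or.inl ⟨x, hx, y, by omega, rfl⟩
  · refine Or.inr ⟨_, ⟨x, hx, b, le_rfl, rfl⟩, adj_add_mk_snd v _ (Or.inr ?_)⟩
    rw [show y = b + 1 by omega]
    push_cast
    ring

lemma rect_eq_univ [NeZero N] [NeZero M] (v : Node N M) :
    rect v (N - 1) (M - 1) = Set.univ := by
  refine Set.eq_univ_of_forall fun u => ⟨(u - v).1.val, ?_, (u - v).2.val, ?_, ?_⟩
  · have := ZMod.val_lt (u - v).1
    omega
  · have := ZMod.val_lt (u - v).2
    omega
  · ext <;> simp

lemma coopOn_rect_one_one {S : Config N M} {v : Node N M} (h00 : S v = Strat.C)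
    (h10 : S (v + (1, 0)) = Strat.C) (h01 : S (v + (0, 1)) = Strat.C)
    (h11 : S (v + (1, 1)) = Strat.C) : S ∈ coopOn (rect v 1 1) := by
  rintro _ ⟨x, hx, y, hy, rfl⟩
  interval_cases x <;> interval_cases y <;> simp [Prod.mk_zero_zero, *]

variable {S : Config N M} {v : Node N M} {a b : ℕ}

lemma reachableWithin_rect_add_left [Nontrivial (ZMod N)]
    (hp : CoopPairBeatsDefector p1 p2 p3 p4) (ha : 1 ≤ a) (hb : 1 ≤ b)
    (hS : S ∈ coopOn (rect v a b)) :
    ∀ k, ReachableWithin p1 p2 p3 p4 (coopOn (rect v (a + k) b)) S k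
  | 0 => reachableWithin_zero hS
  | k + 1 => (reachableWithin_rect_add_left hp ha hb hS k).trans fun _ hS' =>
      let ⟨_, hc, hF⟩ := (isThick_rect (by omega) hb).exists_control hp hS' rect_succ_left
      reachableWithin_one hc hF

lemma reachableWithin_rect_add_right [Nontrivial (ZMod N)]
    (hp : CoopPairBeatsDefector p1 p2 p3 p4) (ha : 1 ≤ a) (hb : 1 ≤ b)
    (hS : S ∈ coopOn (rect v a b)) :
    ∀ k, ReachableWithin p1 p2 p3 p4 (coopOn (rect v a (b + k))) S k
  | 0 => reachableWithin_zero hS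
  | k + 1 => (reachableWithin_rect_add_right hp ha hb hS k).trans fun _ hS' =>
      let ⟨_, hc, hF⟩ := (isThick_rect ha (by omega)).exists_control hp hS' rect_succ_right
      reachableWithin_one hc hF

lemma reachableWithin_coopOn_univ (hp : CoopPairBeatsDefector p1 p2 p3 p4)
    (hN : 2 ≤ N) (hM : 2 ≤ M) (hS : S ∈ coopOn (rect v 1 1)) :
    ReachableWithin p1 p2 p3 p4 (coopOn Set.univ) S (N - 2 + (M - 2)) := by
  have : Fact (1 < N) := ⟨hN⟩
  have : NeZero M := ⟨by omega⟩
  have hrect := rect_eq_univ (N := N) (M := M) v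
  rw [show N - 1 = 1 + (N - 2) by omega, show M - 1 = 1 + (M - 2) by omega] at hrect
  rw [← hrect]
  exact (reachableWithin_rect_add_left hp le_rfl le_rfl hS _).trans fun _ hS' =>
    reachableWithin_rect_add_right hp (by omega) le_rfl hS' _

end Rectangles

section ChainLaw

open scoped ENNReal

variable {N M : ℕ} {κ : Config N M → PMF (Config N M)} {S0 : Config N M}
  {μ : Measure (ℕ → Config N M)}

def cyl (t : ℕ) (s : ℕ → Config N M) : Set (ℕ → Config N M) :=
  {ω | ∀ i ≤ t, ω i = s i}

def prefixMap (t : ℕ) (ω : ℕ → Config N M) : Fin (t + 1) → Config N M := fun i => ω i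

lemma measurable_prefixMap (t : ℕ) : Measurable (prefixMap (N := N) (M := M) t) :=
  measurable_pi_lambda _ fun _ => measurable_pi_apply _

lemma prefixMap_preimage_singleton (t : ℕ) (s : ℕ → Config N M) :
    prefixMap t ⁻¹' {prefixMap t s} = cyl t s := by
  ext ω
  simp [prefixMap, cyl, funext_iff, Fin.forall_iff]

lemma measurableSet_cyl (t : ℕ) (s : ℕ → Config N M) : MeasurableSet (cyl t s) :=
  prefixMap_preimage_singleton t s ▸ measurable_prefixMap t (measurableSet_singleton _)

lemma measure_inter_le_of_cyl [NeZero N] [NeZero M] (μ : Measure (ℕ → Config N M)) (t : ℕ)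
    {E D : Set (ℕ → Config N M)} {r : ℝ≥0∞} (hE : ∀ ω ∈ E, cyl t ω ⊆ E)
    (h : ∀ ω ∈ E, μ (cyl t ω ∩ D) ≤ r * μ (cyl t ω)) : μ (E ∩ D) ≤ r * μ E := by
  classical
  have hfib : ∀ a : Fin (t + 1) → Config N M, MeasurableSet (prefixMap t ⁻¹' {a}) :=
    fun a => measurable_prefixMap t (measurableSet_singleton a)
  have hsum : ∀ X, μ X = ∑ a, μ (prefixMap t ⁻¹' {a} ∩ X) := fun X => by
    simp_rw [← Measure.restrict_apply (hfib _)]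
    rw [sum_measure_preimage_singleton _ fun a _ => hfib a]
    simp
  -- each fibre of `prefixMap t` is a cylinder, which lies in `E` or misses it
  rw [hsum (E ∩ D), hsum E, Finset.mul_sum]
  refine Finset.sum_le_sum fun a _ => ?_
  by_cases ha : ∃ ω ∈ E, prefixMap t ω = a
  · obtain ⟨ω, hω, rfl⟩ := ha
    rw [prefixMap_preimage_singleton, ← Set.inter_assoc,
      Set.inter_eq_left.mpr (hE ω hω)]
    exact h ω hω
  · have hempty : prefixMap t ⁻¹' {a} ∩ E = ∅ :=
      Set.eq_empty_of_forall_notMem fun ω hω => ha ⟨ω, hω.2, hω.1⟩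
    rw [← Set.inter_assoc, hempty, Set.empty_inter, measure_empty]
    exact zero_le

lemma IsChainLaw.ae_zero (hμ : IsChainLaw κ S0 μ) : ∀ᵐ ω ∂μ, ω 0 = S0 := by
  have := hμ.1
  have h1 : μ (cyl 0 fun _ => S0) = 1 :=
    (hμ.2 0 (fun _ => S0) rfl).trans (Finset.prod_range_zero _)
  rw [ae_iff]
  convert (prob_compl_eq_zero_iff (measurableSet_cyl 0 _)).mpr h1 using 2
  ext ω
  simp [cyl]

open Classical in
lemma IsChainLaw.measure_cyl (hμ : IsChainLaw κ S0 μ) (t : ℕ) (s : ℕ → Config N M) :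
    μ (cyl t s) = if s 0 = S0 then ∏ i ∈ Finset.range t, κ (s i) (s (i + 1)) else 0 := by
  split_ifs with h
  · exact hμ.2 t s h
  · exact measure_mono_null (fun ω hω h0 => h ((hω 0 (Nat.zero_le t)).symm.trans h0))
      (ae_iff.mp hμ.ae_zero)

lemma IsChainLaw.ae_kernel_ne_zero [NeZero N] [NeZero M] (hμ : IsChainLaw κ S0 μ) :
    ∀ᵐ ω ∂μ, ∀ t, κ (ω t) (ω (t + 1)) ≠ 0 := by
  refine ae_all_iff.mpr fun t => ae_iff.mpr ?_
  simp only [not_not]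
  refine le_antisymm ?_ zero_le
  have h := measure_inter_le_of_cyl μ (t + 1) (E := {ω | κ (ω t) (ω (t + 1)) = 0})
    (D := Set.univ) (r := 0)
    (fun ω hω ω' hω' => by
      change κ (ω t) (ω (t + 1)) = 0 at hω
      change κ (ω' t) (ω' (t + 1)) = 0
      rwa [hω' t (by omega), hω' (t + 1) le_rfl])
    (fun ω (hω : κ (ω t) (ω (t + 1)) = 0) => by
      rw [Set.inter_univ, zero_mul, hμ.measure_cyl]
      split_ifs
      · exact (Finset.prod_eq_zero (Finset.self_mem_range_succ t) hω).le
      · exact le_rfl)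
  rwa [Set.inter_univ, zero_mul] at h

lemma IsChainLaw.measure_cyl_inter_ne_le (hμ : IsChainLaw κ S0 μ) (t L : ℕ)
    (ω₀ y : ℕ → Config N M) (hy : y 0 = ω₀ t) :
    μ (cyl t ω₀ ∩ {ω | ω (t + L) ≠ y L})
      ≤ (1 - ∏ i ∈ Finset.range L, κ (y i) (y (i + 1))) * μ (cyl t ω₀) := by
  have := hμ.1
  let ω₁ : ℕ → Config N M := fun i => if i ≤ t then ω₀ i else y (i - t)
  have hω₁ : ∀ i, ω₁ (t + i) = y i := by
    rintro (_ | i)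
    · simp [ω₁, hy]
    · simp [ω₁]
  have hsub : cyl (t + L) ω₁ ⊆ cyl t ω₀ :=
    fun ω hω i hi => (hω i (by omega)).trans (if_pos hi)
  have hdisj : Disjoint (cyl t ω₀ ∩ {ω | ω (t + L) ≠ y L}) (cyl (t + L) ω₁) :=
    Set.disjoint_left.mpr fun ω hω hω' => hω.2 ((hω' _ le_rfl).trans (hω₁ L))
  have hmeas : μ (cyl (t + L) ω₁)
      = (∏ i ∈ Finset.range L, κ (y i) (y (i + 1))) * μ (cyl t ω₀) := by
    have hpre : ∀ i ∈ Finset.range t,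
        κ (ω₁ i) (ω₁ (i + 1)) = κ (ω₀ i) (ω₀ (i + 1)) :=
      fun i hi => by
        have := Finset.mem_range.mp hi
        simp only [ω₁, if_pos this.le, if_pos (Nat.succ_le_of_lt this)]
    have hpost : ∀ i ∈ Finset.range L,
        κ (ω₁ (t + i)) (ω₁ (t + i + 1)) = κ (y i) (y (i + 1)) :=
      fun i _ => congrArg₂ (fun a b => κ a b) (hω₁ i) (hω₁ (i + 1))
    rw [hμ.measure_cyl, hμ.measure_cyl, Finset.prod_range_add, Finset.prod_congr rfl hpre,
      Finset.prod_congr rfl hpost, show ω₁ 0 = ω₀ 0 from if_pos (Nat.zero_le t)]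
    split_ifs <;> simp [mul_comm]
  have hle :
      μ (cyl t ω₀ ∩ {ω | ω (t + L) ≠ y L}) + μ (cyl (t + L) ω₁)
        ≤ μ (cyl t ω₀) := by
    rw [← measure_union hdisj (measurableSet_cyl _ _)]
    exact measure_mono (Set.union_subset Set.inter_subset_left hsub)
  rw [ENNReal.sub_mul fun _ _ => measure_ne_top _ _, one_mul, ← hmeas]
  exact ENNReal.le_sub_of_add_le_right (measure_ne_top _ _) hle

end ChainLaw

section Convergence

open scoped ENNReal

variable {N M : ℕ} {p1 p2 p3 p4 ε : ℝ} {κ : Config N M → PMF (Config N M)}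
  {S0 : Config N M} {μ : Measure (ℕ → Config N M)}

lemma IsAdmissible.mem_Rset_of_ne_zero (hκ : IsAdmissible p1 p2 p3 p4 ε κ)
    {S S' : Config N M} (h : κ S S' ≠ 0) : S' ∈ Rset p1 p2 p3 p4 S := by
  have hsupp : (κ S).support ⊆ Rset p1 p2 p3 p4 S := by
    rw [← PMF.toOuterMeasure_apply_eq_one_iff, PMF.toOuterMeasure_apply, ← tsum_subtype]
    exact hκ.2 S
  exact hsupp ((κ S).mem_support_iff S' |>.mpr h)

lemma IsAdmissible.pow_le_prod_traj (hκ : IsAdmissible p1 p2 p3 p4 ε κ)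
    {c : ℕ → Node N M → Node N M} (hc : ∀ s, IsControl (c s)) (S : Config N M) (L : ℕ) :
    ENNReal.ofReal ε ^ L
      ≤ ∏ i ∈ Finset.range L, κ (traj p1 p2 p3 p4 S c i) (traj p1 p2 p3 p4 S c (i + 1)) :=
  calc ENNReal.ofReal ε ^ L = ∏ _i ∈ Finset.range L, ENNReal.ofReal ε := by simp
    _ ≤ _ := Finset.prod_le_prod' fun i _ => hκ.1 _ _ (hc i)

variable [NeZero N] [NeZero M] {A G : Set (Config N M)} {T : ℕ}

lemma IsChainLaw.measure_avoid_le_pow (hμ : IsChainLaw κ S0 μ)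
    (hκ : IsAdmissible p1 p2 p3 p4 ε κ)
    (hA : ∀ S ∈ A, Rset p1 p2 p3 p4 S ⊆ A)
    (hreach : ∀ S ∈ G, ReachableWithin p1 p2 p3 p4 A S T) (n : ℕ) :
    μ {ω | ∀ i ≤ n * T, ω i ∈ G \ A} ≤ (1 - ENNReal.ofReal ε ^ T) ^ n := by
  have := hμ.1
  induction n with
  | zero => exact prob_le_one.trans_eq (pow_zero _).symm
  | succ n ih =>
    have hblock : ∀ ω ∈ {ω | ∀ i ≤ n * T, ω i ∈ G \ A},
        μ (cyl (n * T) ω ∩ {ω' | ω' (n * T + T) ∉ A})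
          ≤ (1 - ENNReal.ofReal ε ^ T) * μ (cyl (n * T) ω) := by
      intro ω hω
      obtain ⟨c, hc, hcA⟩ := (hreach _ (hω _ le_rfl).1).exists_traj_mem hA
      calc μ (cyl (n * T) ω ∩ {ω' | ω' (n * T + T) ∉ A})
          ≤ μ (cyl (n * T) ω ∩
              {ω' | ω' (n * T + T) ≠ traj p1 p2 p3 p4 (ω (n * T)) c T}) :=
            measure_mono <| Set.inter_subset_inter_right _ fun ω' h heq => h (heq ▸ hcA)
        _ ≤ _ := hμ.measure_cyl_inter_ne_le _ _ _ _ rfl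
        _ ≤ _ := mul_le_mul_left (tsub_le_tsub_left (hκ.pow_le_prod_traj hc _ _) 1) _
    calc μ {ω | ∀ i ≤ (n + 1) * T, ω i ∈ G \ A}
        ≤ μ ({ω | ∀ i ≤ n * T, ω i ∈ G \ A} ∩ {ω | ω (n * T + T) ∉ A}) :=
          measure_mono fun ω hω =>
            ⟨fun i hi => hω i (hi.trans (Nat.mul_le_mul_right T n.le_succ)),
              (hω _ (by rw [Nat.succ_mul])).2⟩
      _ ≤ (1 - ENNReal.ofReal ε ^ T) * μ {ω | ∀ i ≤ n * T, ω i ∈ G \ A} :=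
          measure_inter_le_of_cyl μ (n * T)
            (fun ω hω ω' hω' i hi => hω' i hi ▸ hω i hi) hblock
      _ ≤ (1 - ENNReal.ofReal ε ^ T) ^ (n + 1) := by
          rw [pow_succ']
          gcongr

theorem IsChainLaw.ae_eventually_mem (hμ : IsChainLaw κ S0 μ)
    (hκ : IsAdmissible p1 p2 p3 p4 ε κ) (hε : 0 < ε)
    (hA : ∀ S ∈ A, Rset p1 p2 p3 p4 S ⊆ A) (hG : ∀ S ∈ G, Rset p1 p2 p3 p4 S ⊆ G)
    (hS0 : S0 ∈ G) (hreach : ∀ S ∈ G, ReachableWithin p1 p2 p3 p4 A S T) :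
    ∀ᵐ ω ∂μ, ∃ T', ∀ t ≥ T', ω t ∈ A := by
  have hη : 1 - ENNReal.ofReal ε ^ T < 1 := ENNReal.sub_lt_self ENNReal.one_ne_top
    one_ne_zero (pow_ne_zero _ (ENNReal.ofReal_pos.mpr hε).ne')
  have hnever : μ {ω | ∀ i, ω i ∈ G \ A} = 0 :=
    le_antisymm (ge_of_tendsto' (ENNReal.tendsto_pow_atTop_nhds_zero_of_lt_one hη) fun n =>
      (measure_mono (Set.ofPred_subset_ofPred.mpr fun _ hω i _ => hω i)).trans
        (hμ.measure_avoid_le_pow hκ hA hreach n)) zero_le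
  filter_upwards [hμ.ae_zero, hμ.ae_kernel_ne_zero, measure_eq_zero_iff_ae_notMem.mp hnever]
    with ω h0 hstep hω
  have hR : ∀ t, ω (t + 1) ∈ Rset p1 p2 p3 p4 (ω t) :=
    fun t => hκ.mem_Rset_of_ne_zero (hstep t)
  have hGω : ∀ t, ω t ∈ G := fun t => by
    induction t with
    | zero => exact h0 ▸ hS0
    | succ t ih => exact hG _ ih (hR t)
  obtain ⟨t, ht⟩ : ∃ t, ω t ∈ A := by
    by_contra! h
    exact hω fun i => ⟨hGω i, h i⟩
  exact ⟨t, fun s hs => Nat.le_induction ht (fun s _ ih => hA _ ih (hR s)) s hs⟩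

end Convergence

theorem staghunt_as_convergence_coop_general {N M : ℕ} (hN : 3 ≤ N) (hM : 3 ≤ M)
    (p1 p2 p3 p4 : ℝ) (h34 : p3 > p4) (h42 : p4 > p2)
    (hsum : p1 + p2 > 2 * p3)
    (ε : ℝ) (hε : 0 < ε)
    (κ : Config N M → PMF (Config N M)) (hκ : IsAdmissible p1 p2 p3 p4 ε κ)
    (S0 : Config N M)
    (hsq : ∃ v : Node N M, S0 v = Strat.C ∧ S0 (v + (1, 0)) = Strat.C ∧
      S0 (v + (0, 1)) = Strat.C ∧ S0 (v + (1, 1)) = Strat.C)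
    (μ : Measure (ℕ → Config N M)) (hμ : IsChainLaw κ S0 μ) :
    μ {ω | ∃ T : ℕ, ∀ t ≥ T, ω t = (fun _ => Strat.C : Config N M)} = 1 := by
  have : Fact (1 < N) := ⟨by omega⟩
  have : Fact (1 < M) := ⟨by omega⟩
  have hp : CoopPairBeatsDefector p1 p2 p3 p4 :=
    coopPairBeatsDefector_of_le h34.le (by linarith) (by linarith)
  obtain ⟨v, h00, h10, h01, h11⟩ := hsq
  have hae := hμ.ae_eventually_mem hκ hε (A := coopOn Set.univ)
    (G := {S | ∃ v, S ∈ coopOn (rect v 1 1)})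
    (fun S hS S' hS' => by
      rw [← rect_eq_univ 0] at hS ⊢
      exact (isThick_rect (by omega) (by omega)).coopOn_of_mem_Rset hp hS hS')
    (fun S ⟨v, hS⟩ S' hS' =>
      ⟨v, (isThick_rect le_rfl le_rfl).coopOn_of_mem_Rset hp hS hS'⟩)
    ⟨v, coopOn_rect_one_one h00 h10 h01 h11⟩
    (fun S ⟨v, hS⟩ => reachableWithin_coopOn_univ hp (by omega) (by omega) hS)
  have := hμ.1
  have hae' :
      ∀ᵐ ω ∂μ, ω ∈ {ω | ∃ T : ℕ, ∀ t ≥ T, ω t = (fun _ => Strat.C : Config N M)} :=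
    hae.mono fun ω ⟨T, hT⟩ => ⟨T, fun t ht => funext fun u => hT t ht u (Set.mem_univ u)⟩
  rw [measure_congr (ae_eq_univ.mpr (ae_iff.mp hae')), measure_univ]

/-- a.s. convergence of the evolutionary stag hunt game
(`p1 > p3 > p4 > p2`, `p1 + p2 > 2p3`) to total cooperation, provided the
initial configuration contains a square of four cooperators. -/
theorem staghunt_as_convergence_coop {N M : ℕ} (hN : 3 ≤ N) (hM : 3 ≤ M)
    (p1 p2 p3 p4 : ℝ) (h13 : p1 > p3) (h34 : p3 > p4) (h42 : p4 > p2)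
    (hsum : p1 + p2 > 2 * p3)
    (ε : ℝ) (hε : 0 < ε)
    (κ : Config N M → PMF (Config N M)) (hκ : IsAdmissible p1 p2 p3 p4 ε κ)
    (S0 : Config N M)
    (hsq : ∃ v : Node N M, S0 v = Strat.C ∧ S0 (v + (1, 0)) = Strat.C ∧
      S0 (v + (0, 1)) = Strat.C ∧ S0 (v + (1, 1)) = Strat.C)
    (μ : Measure (ℕ → Config N M)) (hμ : IsChainLaw κ S0 μ) :
    μ {ω | ∃ T : ℕ, ∀ t ≥ T, ω t = (fun _ => Strat.C : Config N M)} = 1 :=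
  staghunt_as_convergence_coop_general hN hM p1 p2 p3 p4 h34 h42 hsum ε hε κ hκ S0 hsq μ hμ

end EvolGame
end
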